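/- Let q be a prime and G a finite group. For u = Σ a_g g ∈ ℤG with Σ_{g a q-element, g≠1 allowed} a_g = s, the coefficient-sum over q-elements of u^q, taken modulo q, equals s modulo q; i.e., writing u^q = Σ β_g g, we have Σ_{g q-element} β_g ≡ Σ_{g q-element} a_g (mod q). -/

import Mathlib

open scoped Classical
open Finset

/-!
Write `u = ∑ g, a_g • g`. Then `u ^ q` is the sum over words `w : Fin q → G` of
`(∏ i, a_{w i}) • (w 0 * ⋯ * w (q - 1))`. Since being a `q`-element is invariant under
conjugation, the coefficient sum `τ` over the `q`-elements satisfies `τ (a * b) = τ (b * a)`, so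
the contribution of a word does not change under cyclic rotation. Rotation has order `q`, so modulo
`q` only the constant words survive, and they contribute `∑ g, a_g ^ q • g ^ q`. Finally
`g ^ q` is a `q`-element iff `g` is, and `a ^ q ≡ a [ZMOD q]`.
-/

namespace Equiv.Perm

variable {X : Type*} [DecidableEq X] {p n : ℕ} [Fact p.Prime] {σ : Perm X}

theorem card_modEq_card_filter_apply_eq (hσ : σ ^ p ^ n = 1) {s : Finset X}
    (hs : ∀ x, σ x ∈ s ↔ x ∈ s) : #s ≡ #{x ∈ s | σ x = x} [MOD p] := by
  have h := card_compl_support_modEq (σ := σ.subtypePerm (p := (· ∈ s)) hs) (p := p) (n := n)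
    (by rw [subtypePerm_pow]; ext; simp [hσ])
  rw [support_subtypePerm, Fintype.card_coe] at h
  have : (univ.filter fun x : s => σ x ≠ x)ᶜ.card = #{x ∈ s | σ x = x} := by
    rw [compl_filter]
    simp only [not_not]
    exact card_bij (fun x _ => x.1) (by simp) (fun _ _ _ _ => Subtype.ext) (by simp_all)
  rw [this] at h
  exact h.symm

theorem sum_modEq_sum_filter_apply_eq [Fintype X] (hσ : σ ^ p ^ n = 1) (F : X → ℤ)
    (hF : ∀ x, F (σ x) = F x) : ∑ x, F x ≡ ∑ x with σ x = x, F x [ZMOD p] := by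
  have hmaps : ∀ s : Finset X, ∀ x ∈ s, F x ∈ univ.image F :=
    fun _ x _ => mem_image_of_mem F (mem_univ x)
  rw [← sum_fiberwise_of_maps_to (hmaps _), ← sum_fiberwise_of_maps_to (hmaps _)]
  gcongr with c
  rw [sum_congr rfl fun x hx => (mem_filter.1 hx).2, sum_congr rfl fun x hx => (mem_filter.1 hx).2,
    sum_const, sum_const, filter_comm, nsmul_eq_mul, nsmul_eq_mul]
  have h := card_modEq_card_filter_apply_eq hσ (s := {x | F x = c}) (by simp [hF])
  exact Int.ModEq.mul_right c (Int.natCast_modEq_iff.mpr h)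

end Equiv.Perm

theorem Fintype.sum_pow_eq_sum_prod_ofFn {ι R : Type*} [Fintype ι] [Semiring R] (x : ι → R)
    (n : ℕ) : (∑ i, x i) ^ n = ∑ w : Fin n → ι, (List.ofFn fun k => x (w k)).prod := by
  induction n with
  | zero => simp
  | succ n ih =>
    rw [pow_succ', ih, sum_mul_sum, ← Fintype.sum_prod_type',
      ← (Fin.consEquiv fun _ => ι).sum_comp]
    simp [List.ofFn_succ, Fin.consEquiv]

theorem finRotate_pow_self {n : ℕ} (hn : 2 ≤ n) : finRotate n ^ n = 1 := by
  have h := (isCycle_finRotate_of_le hn).orderOf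
  rw [support_finRotate_of_le hn, card_univ, Fintype.card_fin] at h
  simpa [h] using pow_orderOf_eq_one (finRotate n)

theorem apply_prod_ofFn_comp_finRotate {R M : Type*} [Monoid R]
    (τ : R → M) (hτ : ∀ a b, τ (a * b) = τ (b * a)) {n : ℕ} (y : Fin n → R) :
    τ (List.ofFn (y ∘ finRotate n)).prod = τ (List.ofFn y).prod := by
  cases n with
  | zero => rfl
  | succ n =>
    have hrot : y ∘ finRotate (n + 1) = Fin.snoc (Fin.tail y) (y 0) := by
      rw [Fin.snoc_eq_cons_rotate, Fin.cons_self_tail]; rfl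
    rw [hrot, List.ofFn_succ', List.ofFn_succ]
    simp [hτ, Fin.tail]

def rotateWords (ι : Type*) (n : ℕ) : Equiv.Perm (Fin n → ι) :=
  (finRotate n).symm.arrowCongr (Equiv.refl ι)

section rotateWords

variable {ι : Type*} {n : ℕ}

theorem rotateWords_apply (w : Fin n → ι) : rotateWords ι n w = w ∘ finRotate n := rfl

theorem rotateWords_pow_apply (k : ℕ) (w : Fin n → ι) :
    (rotateWords ι n ^ k) w = w ∘ ⇑(finRotate n ^ k) := by
  induction k generalizing w with
  | zero => rfl
  | succ k ih =>
    rw [pow_succ, Equiv.Perm.mul_apply, ih, rotateWords_apply, pow_succ' (finRotate n)]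
    rfl

theorem rotateWords_pow_self (hn : 2 ≤ n) : rotateWords ι n ^ n = 1 := by
  ext w : 1
  rw [rotateWords_pow_apply, finRotate_pow_self hn]
  rfl

theorem rotateWords_eq_self_iff (hn : 2 ≤ n) {w : Fin n → ι} :
    rotateWords ι n w = w ↔ ∃ i, w = fun _ => i := by
  constructor
  · intro hw
    have hsupp : ∀ j, finRotate n j ≠ j := fun j => by
      rw [← Equiv.Perm.mem_support, support_finRotate_of_le hn]; exact mem_univ j
    let i₀ : Fin n := ⟨0, by omega⟩
    refine ⟨w i₀, funext fun j => ?_⟩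
    obtain ⟨k, hk⟩ := (isCycle_finRotate_of_le hn).exists_pow_eq (hsupp i₀) (hsupp j)
    rw [← hk, ← Function.comp_apply (f := w), ← rotateWords_pow_apply,
      Function.IsFixedPt.perm_pow hw k]
  · rintro ⟨i, rfl⟩
    rfl

end rotateWords

theorem map_sum_pow_modEq_sum_map_pow {ι R : Type*} [Fintype ι] [Semiring R] {p : ℕ}
    (hp : p.Prime) (τ : R →+ ℤ) (hτ : ∀ a b, τ (a * b) = τ (b * a)) (x : ι → R) :
    τ ((∑ i, x i) ^ p) ≡ ∑ i, τ (x i ^ p) [ZMOD p] := by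
  have := Fact.mk hp
  set F : (Fin p → ι) → ℤ := fun w => τ (List.ofFn fun k => x (w k)).prod
  have hF : ∀ w, F (rotateWords ι p w) = F w := fun w =>
    apply_prod_ofFn_comp_finRotate τ hτ (x ∘ w)
  have hfix : ({w | rotateWords ι p w = w} : Finset _) = univ.image fun i (_ : Fin p) => i := by
    ext w
    simp [rotateWords_eq_self_iff hp.two_le, eq_comm]
  calc τ ((∑ i, x i) ^ p) = ∑ w, F w := by rw [Fintype.sum_pow_eq_sum_prod_ofFn, map_sum]
    _ ≡ ∑ w with rotateWords ι p w = w, F w [ZMOD p] :=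
      Equiv.Perm.sum_modEq_sum_filter_apply_eq (n := 1)
        (by simpa using rotateWords_pow_self hp.two_le) F hF
    _ = ∑ i, τ (x i ^ p) := by
      rw [hfix, sum_image fun i _ j _ h => congr_fun h ⟨0, hp.pos⟩]
      simp [F, List.ofFn_const, List.prod_replicate]

namespace MonoidAlgebra

variable {k G : Type*} [CommSemiring k]

noncomputable def sumCoeffsOn (s : Finset G) : MonoidAlgebra k G →+ k :=
  ∑ g ∈ s, (Finsupp.applyAddHom g).comp coeffAddEquiv.toAddMonoidHom

@[simp]
theorem sumCoeffsOn_apply (s : Finset G) (u : MonoidAlgebra k G) :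
    sumCoeffsOn s u = ∑ g ∈ s, u.coeff g := by
  simp [sumCoeffsOn, coeffAddEquiv]

theorem sumCoeffsOn_single (s : Finset G) (g : G) (r : k) :
    sumCoeffsOn s (single g r) = if g ∈ s then r else 0 := by
  simp [Finsupp.single_apply]

theorem sumCoeffsOn_mul_comm [Monoid G] {s : Finset G} (hs : ∀ g h, g * h ∈ s ↔ h * g ∈ s)
    (a b : MonoidAlgebra k G) : sumCoeffsOn s (a * b) = sumCoeffsOn s (b * a) := by
  induction a using induction_linear with
  | zero => simp
  | add a a' ha ha' => simp only [add_mul, mul_add, map_add, ha, ha']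
  | single g r =>
    induction b using induction_linear with
    | zero => simp
    | add b b' hb hb' => simp only [add_mul, mul_add, map_add, hb, hb']
    | single h t => simp only [single_mul_single, sumCoeffsOn_single, hs g h, mul_comm r t]

end MonoidAlgebra

theorem exists_orderOf_pow_prime_eq_prime_pow_iff {G : Type*} [Monoid G] {q : ℕ} (hq : q.Prime)
    (g : G) : (∃ k, orderOf (g ^ q) = q ^ k) ↔ ∃ k, orderOf g = q ^ k := by
  constructor
  · rintro ⟨k, hk⟩
    have hdvd : orderOf g ∣ q ^ (k + 1) := orderOf_dvd_of_pow_eq_one <| by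
      rw [pow_succ', pow_mul, ← hk, pow_orderOf_eq_one]
    obtain ⟨j, -, hj⟩ := (Nat.dvd_prime_pow hq).mp hdvd
    exact ⟨j, hj⟩
  · rintro ⟨k, hk⟩
    obtain ⟨j, -, hj⟩ := (Nat.dvd_prime_pow hq).mp (hk ▸ orderOf_pow_dvd q)
    exact ⟨j, hj⟩

theorem orderOf_mul_comm {G : Type*} [Group G] (g h : G) : orderOf (g * h) = orderOf (h * g) :=
  SemiconjBy.orderOf_eq h (mul_assoc h g h).symm

theorem stmt_14 {G : Type*} [Group G] [Fintype G] (q : ℕ) (hq : q.Prime)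
    (u : MonoidAlgebra ℤ G) :
    (∑ g ∈ Finset.univ.filter (fun g : G => ∃ k : ℕ, orderOf g = q ^ k), (u ^ q).coeff g) ≡
      (∑ g ∈ Finset.univ.filter (fun g : G => ∃ k : ℕ, orderOf g = q ^ k), u.coeff g)
        [ZMOD (q : ℤ)] := by
  set S := Finset.univ.filter (fun g : G => ∃ k : ℕ, orderOf g = q ^ k)
  have hS_mul_comm : ∀ g h, g * h ∈ S ↔ h * g ∈ S := by simp [S, orderOf_mul_comm]
  have hS_pow : ∀ g, g ^ q ∈ S ↔ g ∈ S := by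
    simp [S, exists_orderOf_pow_prime_eq_prime_pow_iff hq]
  have hu : u = ∑ g, MonoidAlgebra.single g (u.coeff g) := by
    ext g
    simp [MonoidAlgebra.coeff_sum]
  calc ∑ g ∈ S, (u ^ q).coeff g
        = MonoidAlgebra.sumCoeffsOn S ((∑ g, MonoidAlgebra.single g (u.coeff g)) ^ q) := by
        rw [← hu, MonoidAlgebra.sumCoeffsOn_apply]
    _ ≡ ∑ g, MonoidAlgebra.sumCoeffsOn S (MonoidAlgebra.single g (u.coeff g) ^ q) [ZMOD q] :=
        map_sum_pow_modEq_sum_map_pow hq _ (MonoidAlgebra.sumCoeffsOn_mul_comm hS_mul_comm) _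
    _ = ∑ g, if g ∈ S then u.coeff g ^ q else 0 := by
        simp only [MonoidAlgebra.single_pow, MonoidAlgebra.sumCoeffsOn_single, hS_pow]
    _ ≡ ∑ g, if g ∈ S then u.coeff g else 0 [ZMOD q] := by
        gcongr with g
        split_ifs
        exacts [Int.ModEq.pow_prime_eq_self hq _, rfl]
    _ = ∑ g ∈ S, u.coeff g := by rw [sum_ite_mem, univ_inter]
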